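/- arXiv:2403.17826 — 4 statements merged into one kernel-verified Lean document; each statement's English description precedes it below -/
import Mathlib

section
/- STACKELSAT polynomially reduces to STACKELMIN: for a Stackelberg task over variables V with maximum leader action cost c^L_max and maximum follower action cost c^F_max, there exists a leader plan making the follower task unsolvable if and only if there exists a leader plan πL with cost pair (c(πL), c^F(πL)) weakly dominating the bounds (B^L, B^F) where B^L = 2^|V| · c^L_max and B^F = 2^|V| · c^F_max + 1. -/
/-- A STRIPS action: positive preconditions `pre`, negative preconditions `npre`,
add effect `add`, delete effect `del`, and a cost. -/
structure Act (V : Type) where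
  pre : Finset V
  npre : Finset V
  add : Finset V
  del : Finset V
  cost : ℕ

variable {V : Type} [DecidableEq V]

/-- An action is applicable in a state iff its precondition holds. -/
def app (s : Finset V) (a : Act V) : Prop := a.pre ⊆ s ∧ Disjoint a.npre s

/-- Executing an action: s⟦a⟧ = (s \ del(a)) ∪ add(a). -/
def exec (s : Finset V) (a : Act V) : Finset V := (s \ a.del) ∪ a.add

/-- Iterated execution of an action sequence. -/
def execSeq (s : Finset V) : List (Act V) → Finset V
  | [] => s
  | a :: π => execSeq (exec s a) π

/-- Iterated applicability of an action sequence. -/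
def appSeq (s : Finset V) : List (Act V) → Prop
  | [] => True
  | a :: π => app s a ∧ appSeq (exec s a) π

/-- The cost of an action sequence. -/
def listCost (π : List (Act V)) : ℕ := (π.map Act.cost).sum

/-- Optimal follower response cost from state s: minimal cost of a follower plan,
∞ (⊤) if the follower task is unsolvable. -/
noncomputable def fcost (AF : Finset (Act V)) (s GF : Finset V) : ℕ∞ :=
  sInf {c : ℕ∞ | ∃ π, (∀ a ∈ π, a ∈ AF) ∧ appSeq s π ∧ GF ⊆ execSeq s π ∧
    c = (listCost π : ℕ∞)}

lemma execSeq_append (s : Finset V) (p q : List (Act V)) :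
    execSeq s (p ++ q) = execSeq (execSeq s p) q := by
  induction p generalizing s with
  | nil => rfl
  | cons a p ih => simp [execSeq, ih]

lemma appSeq_append (s : Finset V) (p q : List (Act V)) :
    appSeq s (p ++ q) ↔ appSeq s p ∧ appSeq (execSeq s p) q := by
  induction p generalizing s with
  | nil => simp [appSeq, execSeq]
  | cons a p ih => simp [appSeq, execSeq, ih, and_assoc]

lemma listCost_append (p q : List (Act V)) :
    listCost (p ++ q) = listCost p + listCost q := by
  simp [listCost]

lemma listCost_take_le (n : ℕ) (l : List (Act V)) :
    listCost (l.take n) ≤ listCost l := by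
  conv_rhs => rw [← List.take_append_drop n l]
  rw [listCost_append]; omega

lemma listCost_le_of_mem (A : Finset (Act V)) (π : List (Act V))
    (h : ∀ a ∈ π, a ∈ A) : listCost π ≤ π.length * A.sup Act.cost := by
  induction π with
  | nil => simp [listCost]
  | cons a π ih =>
    have h1 : a.cost ≤ A.sup Act.cost := Finset.le_sup (h a (by simp))
    have h2 := ih (fun b hb => h b (by simp [hb]))
    simp only [listCost, List.map_cons, List.sum_cons, List.length_cons]
    calc a.cost + (π.map Act.cost).sum ≤ A.sup Act.cost + π.length * A.sup Act.cost :=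
          Nat.add_le_add h1 h2
      _ = (π.length + 1) * A.sup Act.cost := by ring

lemma remove_loop (s : Finset V) (π : List (Act V)) (i j : ℕ)
    (hij : i < j) (hj : j ≤ π.length)
    (heq : execSeq s (π.take i) = execSeq s (π.take j))
    (happ : appSeq s π) :
    appSeq s (π.take i ++ π.drop j) ∧
    execSeq s (π.take i ++ π.drop j) = execSeq s π ∧
    listCost (π.take i ++ π.drop j) ≤ listCost π ∧
    (π.take i ++ π.drop j).length < π.length := by
  have hsplit : π = π.take j ++ π.drop j := (List.take_append_drop j π).symm
  have happ' : appSeq s (π.take j) ∧ appSeq (execSeq s (π.take j)) (π.drop j) := by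
    rw [← appSeq_append]; rw [← hsplit]; exact happ
  have htt : (π.take j).take i = π.take i := by
    rw [List.take_take, min_eq_left hij.le]
  have happi : appSeq s (π.take i) := by
    have := happ'.1
    rw [← List.take_append_drop i (π.take j), appSeq_append] at this
    rw [htt] at this
    exact this.1
  refine ⟨?_, ?_, ?_, ?_⟩
  · rw [appSeq_append]
    exact ⟨happi, by rw [heq]; exact happ'.2⟩
  · rw [execSeq_append, heq, ← execSeq_append, ← hsplit]
  · have h1 : listCost (π.take i) ≤ listCost (π.take j) := by
      rw [← htt]; exact listCost_take_le i (π.take j)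
    rw [listCost_append]
    conv_rhs => rw [hsplit, listCost_append]
    omega
  · simp only [List.length_append, List.length_take, List.length_drop]
    omega

lemma shorten [Fintype V] (A : Finset (Act V)) (s : Finset V) :
    ∀ (n : ℕ) (π : List (Act V)), π.length ≤ n →
    (∀ a ∈ π, a ∈ A) → appSeq s π →
    ∃ π', (∀ a ∈ π', a ∈ A) ∧ appSeq s π' ∧ execSeq s π' = execSeq s π ∧
      listCost π' ≤ listCost π ∧ π'.length ≤ 2 ^ Fintype.card V := by
  intro n
  induction n with
  | zero =>
    intro π hlen hA happ
    refine ⟨π, hA, happ, rfl, le_rfl, ?_⟩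
    have := Nat.one_le_two_pow (n := Fintype.card V)
    omega
  | succ n ih =>
    intro π hlen hA happ
    by_cases hsmall : π.length ≤ 2 ^ Fintype.card V
    · exact ⟨π, hA, happ, rfl, le_rfl, hsmall⟩
    · push_neg at hsmall
      have hcard : Fintype.card (Finset V) < Fintype.card (Fin (π.length + 1)) := by
        simp [Fintype.card_finset]; omega
      obtain ⟨i, j, hij, hfij⟩ :=
        Fintype.exists_ne_map_eq_of_card_lt
          (fun i : Fin (π.length + 1) => execSeq s (π.take i)) hcard
      set i' : ℕ := min i.val j.val with hi'
      set j' : ℕ := max i.val j.val with hj'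
      have hlt : i' < j' := by
        rcases lt_or_gt_of_ne (Fin.val_ne_of_ne hij) with h | h <;> omega
      have hje : j' ≤ π.length := by
        have := i.isLt; have := j.isLt; omega
      have heq : execSeq s (π.take i') = execSeq s (π.take j') := by
        rcases le_total i.val j.val with h | h
        · simpa [hi', hj', min_eq_left h, max_eq_right h] using hfij
        · simpa [hi', hj', min_eq_right h, max_eq_left h] using hfij.symm
      obtain ⟨happ', hexec', hcost', hlen'⟩ := remove_loop s π i' j' hlt hje heq happ
      have hA' : ∀ a ∈ π.take i' ++ π.drop j', a ∈ A := by
        intro a ha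
        rcases List.mem_append.mp ha with h | h
        · exact hA a (List.mem_of_mem_take h)
        · exact hA a (List.mem_of_mem_drop h)
      obtain ⟨π', h1, h2, h3, h4, h5⟩ :=
        ih (π.take i' ++ π.drop j') (by omega) hA' happ'
      exact ⟨π', h1, h2, by rw [h3, hexec'], le_trans h4 hcost', h5⟩

/-- STACKELSAT reduces to STACKELMIN: some leader plan makes the follower task
unsolvable iff some leader plan meets the bounds B^L = 2^|V|·c^L_max,
B^F = 2^|V|·c^F_max + 1. -/
theorem stackelsat_to_stackelmin [Fintype V]
    (AL AF : Finset (Act V)) (I GF : Finset V) :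
    (∃ πL, (∀ a ∈ πL, a ∈ AL) ∧ appSeq I πL ∧ fcost AF (execSeq I πL) GF = ⊤) ↔
    (∃ πL, (∀ a ∈ πL, a ∈ AL) ∧ appSeq I πL ∧
      listCost πL ≤ 2 ^ Fintype.card V * AL.sup Act.cost ∧
      ((2 ^ Fintype.card V * AF.sup Act.cost : ℕ) : ℕ∞) + 1 ≤
        fcost AF (execSeq I πL) GF) := by
  constructor
  · rintro ⟨πL, hAL, happ, htop⟩
    obtain ⟨πL', h1, h2, h3, h4, h5⟩ := shorten AL I πL.length πL le_rfl hAL happ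
    refine ⟨πL', h1, h2, ?_, ?_⟩
    · calc listCost πL' ≤ πL'.length * AL.sup Act.cost := listCost_le_of_mem AL πL' h1
        _ ≤ 2 ^ Fintype.card V * AL.sup Act.cost := Nat.mul_le_mul_right _ h5
    · rw [h3, htop]; exact le_top
  · rintro ⟨πL, hAL, happ, -, hBF⟩
    refine ⟨πL, hAL, happ, ?_⟩
    by_contra htop
    set s := execSeq I πL with hs
    have hne : ¬ ∀ c ∈ {c : ℕ∞ | ∃ π, (∀ a ∈ π, a ∈ AF) ∧ appSeq s π ∧
        GF ⊆ execSeq s π ∧ c = (listCost π : ℕ∞)}, c = ⊤ := by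
      intro h
      exact htop (sInf_eq_top.mpr h)
    push_neg at hne
    obtain ⟨c, hcS, -⟩ := hne
    obtain ⟨π, hAF, happF, hG, -⟩ := hcS
    obtain ⟨π', h1, h2, h3, h4, h5⟩ := shorten AF s π.length π le_rfl hAF happF
    have hmem : ((listCost π' : ℕ∞)) ∈ {c : ℕ∞ | ∃ π, (∀ a ∈ π, a ∈ AF) ∧ appSeq s π ∧
        GF ⊆ execSeq s π ∧ c = (listCost π : ℕ∞)} :=
      ⟨π', h1, h2, by rw [h3]; exact hG, rfl⟩
    have hle : fcost AF s GF ≤ (listCost π' : ℕ∞) := sInf_le hmem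
    have hcost : listCost π' ≤ 2 ^ Fintype.card V * AF.sup Act.cost := by
      calc listCost π' ≤ π'.length * AF.sup Act.cost := listCost_le_of_mem AF π' h1
        _ ≤ 2 ^ Fintype.card V * AF.sup Act.cost := Nat.mul_le_mul_right _ h5
    have hfin : fcost AF s GF ≤ ((2 ^ Fintype.card V * AF.sup Act.cost : ℕ) : ℕ∞) :=
      hle.trans (by exact_mod_cast hcost)
    have := hBF.trans hfin
    have h' : ((2 ^ Fintype.card V * AF.sup Act.cost : ℕ) : ℕ∞) <
        ((2 ^ Fintype.card V * AF.sup Act.cost : ℕ) : ℕ∞) :=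
      lt_of_lt_of_le (ENat.lt_add_one_iff (by exact ENat.coe_ne_top _) |>.mpr le_rfl) this
    exact lt_irrefl _ h'
end

section
/- In the knapsack-reduction Stackelberg task (V = I = G^F = U, leader action sel_u deletes u with cost s(u), follower action take_u adds u with cost v(u)), for any leader plan πL selecting a subset S ⊆ U (each sel_u applied at most once), the optimal follower response cost equals Σ_{u ∈ S'} v(u) where S' is the set of objects deleted in the final leader state; consequently there is a leader plan with leader cost ≤ B and follower cost ≥ K iff there exists S ⊆ U with Σ_{u∈S} s(u) ≤ B and Σ_{u∈S} v(u) ≥ K. -/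
variable {V : Type} [DecidableEq V]

/-- Leader action deleting object u, with cost s(u). -/
def selA {U : Type} [DecidableEq U] (sz : U → ℕ) (u : U) : Act U :=
  { pre := ∅, npre := ∅, add := ∅, del := {u}, cost := sz u }

/-- Follower action re-adding object u, with cost v(u). -/
def takeA {U : Type} [DecidableEq U] (vl : U → ℕ) (u : U) : Act U :=
  { pre := ∅, npre := ∅, add := {u}, del := ∅, cost := vl u }


lemma execSeq_sel {U : Type} [DecidableEq U] (sz : U → ℕ) (s : Finset U) :
    ∀ L : List U, execSeq s (L.map (selA sz)) = s \ L.toFinset := by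
  intro L
  induction L generalizing s with
  | nil => simp [execSeq]
  | cons a t ih =>
      simp only [List.map_cons, execSeq, exec, selA, ih]
      ext x; simp; tauto

lemma execSeq_take {U : Type} [DecidableEq U] (vl : U → ℕ) (s : Finset U) :
    ∀ L : List U, execSeq s (L.map (takeA vl)) = s ∪ L.toFinset := by
  intro L
  induction L generalizing s with
  | nil => simp [execSeq]
  | cons a t ih =>
      simp only [List.map_cons, execSeq, exec, takeA, ih]
      ext x; simp

lemma cost_sel {U : Type} [DecidableEq U] (sz : U → ℕ) (L : List U) :
    listCost (L.map (selA sz)) = (L.map sz).sum := by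
  simp only [listCost, List.map_map]; rfl

lemma cost_take {U : Type} [DecidableEq U] (vl : U → ℕ) (L : List U) :
    listCost (L.map (takeA vl)) = (L.map vl).sum := by
  simp only [listCost, List.map_map]; rfl

lemma sum_toFinset_le {U : Type} [DecidableEq U] (f : U → ℕ) :
    ∀ L : List U, ∑ u ∈ L.toFinset, f u ≤ (L.map f).sum := by
  intro L
  induction L with
  | nil => simp
  | cons a t ih =>
      simp only [List.toFinset_cons, List.map_cons, List.sum_cons]
      by_cases h : a ∈ t.toFinset
      · rw [Finset.insert_eq_self.mpr h]
        exact le_trans ih (Nat.le_add_left _ _)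
      · rw [Finset.sum_insert h]
        exact Nat.add_le_add_left ih _

lemma sum_nodup {U : Type} [DecidableEq U] (f : U → ℕ) (L : List U) (h : L.Nodup) :
    (L.map f).sum = ∑ u ∈ L.toFinset, f u := by
  induction L with
  | nil => simp
  | cons a t ih =>
      simp only [List.nodup_cons] at h
      rw [List.map_cons, List.sum_cons, List.toFinset_cons,
        Finset.sum_insert (by simp [h.1]), ih h.2]

/-- Knapsack reduction: (a) after a leader plan deleting a subset, the optimal
follower response cost equals the sum of values of the deleted objects; (b) there is
a leader plan with cost ≤ B and follower cost ≥ K iff a knapsack solution exists. -/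
theorem knapsack_reduction {U : Type} [Fintype U] [DecidableEq U]
    (sz vl : U → ℕ) (hs : ∀ u, 0 < sz u) (hv : ∀ u, 0 < vl u) (B K : ℕ) :
    (∀ L : List U, L.Nodup →
      (∃ πF : List U,
        (Finset.univ : Finset U) ⊆
          execSeq (execSeq Finset.univ (L.map (selA sz))) (πF.map (takeA vl)) ∧
        listCost (πF.map (takeA vl)) =
          ∑ u ∈ Finset.univ \ execSeq Finset.univ (L.map (selA sz)), vl u) ∧
      (∀ πF : List U,
        (Finset.univ : Finset U) ⊆
          execSeq (execSeq Finset.univ (L.map (selA sz))) (πF.map (takeA vl)) →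
        ∑ u ∈ Finset.univ \ execSeq Finset.univ (L.map (selA sz)), vl u ≤
          listCost (πF.map (takeA vl)))) ∧
    ((∃ L : List U, listCost (L.map (selA sz)) ≤ B ∧
        ∀ πF : List U,
          (Finset.univ : Finset U) ⊆
            execSeq (execSeq Finset.univ (L.map (selA sz))) (πF.map (takeA vl)) →
          K ≤ listCost (πF.map (takeA vl))) ↔
      ∃ S : Finset U, ∑ u ∈ S, sz u ≤ B ∧ K ≤ ∑ u ∈ S, vl u) := by
  have key : ∀ L : List U,
      execSeq (Finset.univ : Finset U) (L.map (selA sz)) = Finset.univ \ L.toFinset :=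
    fun L => execSeq_sel sz _ L
  have hdel : ∀ L : List U,
      (Finset.univ : Finset U) \ execSeq Finset.univ (L.map (selA sz)) = L.toFinset := by
    intro L; rw [key]; ext x; simp
  have hcover : ∀ (L πF : List U),
      ((Finset.univ : Finset U) ⊆
        execSeq (execSeq Finset.univ (L.map (selA sz))) (πF.map (takeA vl))) ↔
      L.toFinset ⊆ πF.toFinset := by
    intro L πF
    rw [key, execSeq_take]
    constructor
    · intro h x hx
      have := h (Finset.mem_univ x)
      simp at this
      rcases this with h1 | h1
      · exact absurd (by simpa using hx) h1
      · simpa using h1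
    · intro h x _
      by_cases hx : x ∈ L.toFinset
      · simp [h hx]
      · simp [hx]
  have hlow : ∀ (L πF : List U),
      (Finset.univ : Finset U) ⊆
        execSeq (execSeq Finset.univ (L.map (selA sz))) (πF.map (takeA vl)) →
      ∑ u ∈ L.toFinset, vl u ≤ listCost (πF.map (takeA vl)) := by
    intro L πF h
    rw [cost_take]
    calc ∑ u ∈ L.toFinset, vl u ≤ ∑ u ∈ πF.toFinset, vl u :=
          Finset.sum_le_sum_of_subset ((hcover L πF).mp h)
      _ ≤ (πF.map vl).sum := sum_toFinset_le vl πF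
  have hex : ∀ L : List U,
      (Finset.univ : Finset U) ⊆
        execSeq (execSeq Finset.univ (L.map (selA sz)))
          ((L.toFinset.toList).map (takeA vl)) ∧
      listCost ((L.toFinset.toList).map (takeA vl)) = ∑ u ∈ L.toFinset, vl u := by
    intro L
    constructor
    · rw [hcover]; intro x hx; simpa using hx
    · rw [cost_take, sum_nodup vl _ (Finset.nodup_toList _)]
      congr 1; ext x; simp
  constructor
  · intro L _
    refine ⟨⟨L.toFinset.toList, ?_, ?_⟩, ?_⟩
    · exact (hex L).1
    · rw [(hex L).2, hdel]
    · intro πF h; rw [hdel]; exact hlow L πF h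
  · constructor
    · rintro ⟨L, hB, hK⟩
      refine ⟨L.toFinset, ?_, ?_⟩
      · calc ∑ u ∈ L.toFinset, sz u ≤ (L.map sz).sum := sum_toFinset_le sz L
          _ ≤ B := by rwa [cost_sel] at hB
      · have := hK L.toFinset.toList (hex L).1
        rwa [(hex L).2] at this
    · rintro ⟨S, hB, hK⟩
      refine ⟨S.toList, ?_, ?_⟩
      · rw [cost_sel, sum_nodup sz _ (Finset.nodup_toList _)]
        simpa using hB
      · intro πF h
        have := hlow S.toList πF h
        have hST : S.toList.toFinset = S := by ext x; simp
        rw [hST] at this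
        exact le_trans hK this
end

section
/- In the SAT-reduction Stackelberg task for a CNF φ over x_1,…,x_n (leader deletes one of T_i, F_i for each i to fix an assignment; follower has for each clause C_k an action val_k adding U with precondition asserting the negation of every literal of C_k), the follower task is unsolvable after a leader plan fixing a complete assignment if and only if that assignment satisfies φ; hence STACKELSAT for this task answers yes iff φ is satisfiable. -/
variable {V : Type} [DecidableEq V]

/-- Facts of the SAT-reduction task: T_i, F_i for each variable, and U. -/
inductive SFact (n : ℕ) where
  | T : Fin n → SFact n
  | F : Fin n → SFact n
  | U : SFact n
  deriving DecidableEq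

/-- Leader action fixing variable i to value b by deleting the opposite fact. -/
def selV (n : ℕ) (i : Fin n) (b : Bool) : Act (SFact n) :=
  { pre := {if b then SFact.T i else SFact.F i}, npre := ∅, add := ∅,
    del := {if b then SFact.F i else SFact.T i}, cost := 1 }

/-- Follower action for clause c: precondition asserts the negation of every literal
of c, add effect {U}. -/
def valC (n : ℕ) (c : List (Fin n × Bool)) : Act (SFact n) :=
  { pre := (c.map fun l => if l.2 then SFact.F l.1 else SFact.T l.1).toFinset,
    npre := ∅, add := {SFact.U}, del := ∅, cost := 1 }

/-- Leader actions of the SAT-reduction task. -/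
def isSatLeader (n : ℕ) (a : Act (SFact n)) : Prop := ∃ i b, a = selV n i b

/-- Follower actions of the SAT-reduction task. -/
def isSatFollower (n : ℕ) (clauses : List (List (Fin n × Bool)))
    (a : Act (SFact n)) : Prop := ∃ c ∈ clauses, a = valC n c

/-- Initial state: all T_i and F_i. -/
def satInit (n : ℕ) : Finset (SFact n) :=
  (Finset.univ.image (SFact.T (n := n))) ∪ (Finset.univ.image (SFact.F (n := n)))

/-!
The follower's actions only add `U` and their preconditions mention only the facts `T i`, `F i`,
so the follower reaches `U` iff some `val_k` is applicable in the state the leader leaves, i.e.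
iff that state contains, for every literal of some clause, the fact that makes it false. After
the leader fixes `α` the state holds exactly `T i` for `α i = true` and `F i` for `α i = false`,
so this happens iff `α` falsifies a clause. Conversely, every leader action needs the fact it
does not delete, so any applicable leader plan leaves one of `T i`, `F i` for each `i`; reading
off an assignment `α` from the surviving facts, the final state contains that of `α`, and the
follower would win if `α` falsified a clause.
-/

section SatReduction

variable {n : ℕ}

/-- The fact whose presence makes the literal `l` false: a literal `(i, b)` reads `x_i = b`, so
it is `F i` for `x_i` and `T i` for `¬x_i`. -/
def negFact (l : Fin n × Bool) : SFact n := if l.2 then SFact.F l.1 else SFact.T l.1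

lemma negFact_injective : Function.Injective (negFact (n := n)) := by
  rintro ⟨i, _ | _⟩ ⟨j, _ | _⟩ h <;> simp_all [negFact]

lemma negFact_ne_U (l : Fin n × Bool) : negFact l ≠ SFact.U := by
  unfold negFact; split <;> simp

lemma mem_satInit {x : SFact n} : x ∈ satInit n ↔ x ≠ SFact.U := by
  cases x <;> simp [satInit]

lemma app_selV {s : Finset (SFact n)} {i : Fin n} {b : Bool} :
    app s (selV n i b) ↔ negFact (i, !b) ∈ s := by
  cases b <;> simp [app, selV, negFact]

lemma exec_selV (s : Finset (SFact n)) (i : Fin n) (b : Bool) :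
    exec s (selV n i b) = s.erase (negFact (i, b)) := by
  cases b <;> simp [exec, selV, negFact, Finset.sdiff_singleton_eq_erase]

lemma app_valC {s : Finset (SFact n)} {c : List (Fin n × Bool)} :
    app s (valC n c) ↔ ∀ l ∈ c, negFact l ∈ s := by
  simp only [app, valC, Finset.disjoint_empty_left, and_true, Finset.subset_iff,
    List.mem_toFinset, List.mem_map]
  exact ⟨fun h l hl => h ⟨l, hl, rfl⟩, fun h _ ⟨l, hl, hx⟩ => hx ▸ h l hl⟩

lemma exec_valC (s : Finset (SFact n)) (c : List (Fin n × Bool)) :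
    exec s (valC n c) = insert SFact.U s := by
  ext; simp [exec, valC, or_comm]

def FollowerUnsolvable (clauses : List (List (Fin n × Bool))) (s : Finset (SFact n)) : Prop :=
  ∀ πF, (∀ a ∈ πF, isSatFollower n clauses a) →
    ¬ (appSeq s πF ∧ {SFact.U} ⊆ execSeq s πF)

lemma FollowerUnsolvable.not_app_valC {clauses : List (List (Fin n × Bool))}
    {s : Finset (SFact n)} (h : FollowerUnsolvable clauses s) {c : List (Fin n × Bool)}
    (hc : c ∈ clauses) : ¬ app s (valC n c) := fun happ =>
  h [valC n c] (by simpa using ⟨c, hc, rfl⟩)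
    ⟨⟨happ, trivial⟩, by simp [execSeq, exec_valC]⟩

lemma followerUnsolvable_iff {clauses : List (List (Fin n × Bool))} {s : Finset (SFact n)}
    (hU : SFact.U ∉ s) :
    FollowerUnsolvable clauses s ↔ ∀ c ∈ clauses, ¬ app s (valC n c) := by
  refine ⟨fun h _ hc => h.not_app_valC hc, fun h πF hπF ⟨happ, hgoal⟩ => ?_⟩
  cases πF with
  | nil => exact hU (hgoal (Finset.mem_singleton_self _))
  | cons a πF =>
    obtain ⟨c, hc, rfl⟩ := hπF a List.mem_cons_self
    exact h c hc happ.1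

lemma execSeq_map_selV (α : Fin n → Bool) (is : List (Fin n)) (s : Finset (SFact n)) :
    execSeq s (is.map fun i => selV n i (α i)) =
      s \ (is.map fun i => negFact (i, α i)).toFinset := by
  induction is generalizing s with
  | nil => simp [execSeq]
  | cons i is ih =>
    ext x
    simp only [List.map_cons, execSeq, exec_selV, ih, List.toFinset_cons, Finset.mem_sdiff,
      Finset.mem_erase, Finset.mem_insert]
    tauto

lemma appSeq_map_selV (α : Fin n → Bool) {is : List (Fin n)} (hnd : is.Nodup)
    {s : Finset (SFact n)} (hs : ∀ i ∈ is, negFact (i, !α i) ∈ s) :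
    appSeq s (is.map fun i => selV n i (α i)) := by
  induction is generalizing s with
  | nil => trivial
  | cons i is ih =>
    rw [List.nodup_cons] at hnd
    refine ⟨app_selV.mpr (hs i List.mem_cons_self), ih hnd.2 fun j hj => ?_⟩
    have hji : j ≠ i := fun h => hnd.1 (h ▸ hj)
    rw [exec_selV, Finset.mem_erase]
    exact ⟨fun h => hji (congrArg Prod.fst (negFact_injective h)),
      hs j (List.mem_cons_of_mem _ hj)⟩

lemma negFact_mem_execSeq_ofFn_selV (α : Fin n → Bool) (l : Fin n × Bool) :
    negFact l ∈ execSeq (satInit n) (List.ofFn fun i => selV n i (α i)) ↔ α l.1 ≠ l.2 := by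
  rw [List.ofFn_eq_map, execSeq_map_selV, Finset.mem_sdiff, mem_satInit]
  simp only [List.mem_toFinset, List.mem_map, List.mem_finRange, negFact_injective.eq_iff,
    true_and]
  constructor
  · rintro ⟨-, h⟩ hl
    exact h ⟨l.1, by rw [hl]⟩
  · rintro h
    exact ⟨negFact_ne_U l, fun ⟨i, hi⟩ => h (by rw [← hi])⟩

lemma U_not_mem_execSeq_ofFn_selV (α : Fin n → Bool) :
    SFact.U ∉ execSeq (satInit n) (List.ofFn fun i => selV n i (α i)) := by
  rw [List.ofFn_eq_map, execSeq_map_selV, Finset.mem_sdiff, mem_satInit]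
  simp

lemma appSeq_ofFn_selV (α : Fin n → Bool) :
    appSeq (satInit n) (List.ofFn fun i => selV n i (α i)) := by
  rw [List.ofFn_eq_map]
  exact appSeq_map_selV α (List.nodup_finRange n) fun _ _ => mem_satInit.mpr (negFact_ne_U _)

lemma followerUnsolvable_ofFn_selV_iff (clauses : List (List (Fin n × Bool)))
    (α : Fin n → Bool) :
    FollowerUnsolvable clauses (execSeq (satInit n) (List.ofFn fun i => selV n i (α i))) ↔
      ∀ c ∈ clauses, ∃ l ∈ c, α l.1 = l.2 := by
  rw [followerUnsolvable_iff (U_not_mem_execSeq_ofFn_selV α)]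
  simp only [app_valC, negFact_mem_execSeq_ofFn_selV, not_forall, not_not, exists_prop]

def CoversVariables (s : Finset (SFact n)) : Prop := ∀ i, ∃ b, negFact (i, b) ∈ s

lemma CoversVariables.exec_selV {s : Finset (SFact n)} (hs : CoversVariables s)
    {i : Fin n} {b : Bool} (happ : app s (selV n i b)) :
    CoversVariables (exec s (selV n i b)) := by
  intro j
  obtain ⟨b', hb'⟩ := hs j
  simp only [_root_.exec_selV, Finset.mem_erase]
  by_cases h : negFact (j, b') = negFact (i, b)
  · obtain ⟨rfl, rfl⟩ := Prod.ext_iff.mp (negFact_injective h)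
    exact ⟨!b', fun h' => by simpa using negFact_injective h', app_selV.mp happ⟩
  · exact ⟨b', h, hb'⟩

lemma CoversVariables.execSeq {πL : List (Act (SFact n))}
    (hL : ∀ a ∈ πL, isSatLeader n a) {s : Finset (SFact n)} (happ : appSeq s πL)
    (hs : CoversVariables s) : CoversVariables (execSeq s πL) := by
  induction πL generalizing s with
  | nil => exact hs
  | cons a πL ih =>
    obtain ⟨i, b, rfl⟩ := hL a List.mem_cons_self
    exact ih (fun a ha => hL a (List.mem_cons_of_mem _ ha)) happ.2 (hs.exec_selV happ.1)

lemma coversVariables_satInit : CoversVariables (satInit n) :=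
  fun _ => ⟨true, mem_satInit.mpr (negFact_ne_U _)⟩

lemma CoversVariables.exists_assignment {s : Finset (SFact n)} (hs : CoversVariables s) :
    ∃ α : Fin n → Bool, ∀ l : Fin n × Bool, α l.1 ≠ l.2 → negFact l ∈ s := by
  choose β hβ using hs
  refine ⟨fun i => !β i, fun l hl => ?_⟩
  obtain ⟨i, b⟩ := l
  obtain rfl : b = β i := by simpa [eq_comm] using hl
  exact hβ i

end SatReduction

/-- SAT reduction: a complete leader assignment makes the follower task unsolvable iff
the assignment satisfies φ; hence STACKELSAT answers yes iff φ is satisfiable. -/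
theorem sat_reduction (n : ℕ) (clauses : List (List (Fin n × Bool))) :
    (∀ α : Fin n → Bool,
      ((∀ πF, (∀ a ∈ πF, isSatFollower n clauses a) →
        ¬ (appSeq (execSeq (satInit n) (List.ofFn fun i => selV n i (α i))) πF ∧
           {SFact.U} ⊆
             execSeq (execSeq (satInit n) (List.ofFn fun i => selV n i (α i))) πF)) ↔
      ∀ c ∈ clauses, ∃ l ∈ c, α l.1 = l.2)) ∧
    ((∃ πL, (∀ a ∈ πL, isSatLeader n a) ∧ appSeq (satInit n) πL ∧
        ∀ πF, (∀ a ∈ πF, isSatFollower n clauses a) →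
          ¬ (appSeq (execSeq (satInit n) πL) πF ∧
             {SFact.U} ⊆ execSeq (execSeq (satInit n) πL) πF)) ↔
      ∃ α : Fin n → Bool, ∀ c ∈ clauses, ∃ l ∈ c, α l.1 = l.2) := by
  refine ⟨followerUnsolvable_ofFn_selV_iff clauses, ⟨?_, ?_⟩⟩
  · rintro ⟨πL, hL, happ, hunsolv⟩
    obtain ⟨α, hα⟩ := (coversVariables_satInit.execSeq hL happ).exists_assignment
    refine ⟨α, fun c hc => ?_⟩
    by_contra! hfalse
    exact FollowerUnsolvable.not_app_valC hunsolv hc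
      (app_valC.mpr fun l hl => hα l (hfalse l hl))
  · rintro ⟨α, hα⟩
    refine ⟨_, ?_, appSeq_ofFn_selV α, (followerUnsolvable_ofFn_selV_iff clauses α).mpr hα⟩
    intro a ha
    obtain ⟨i, rfl⟩ := List.mem_ofFn.mp ha
    exact ⟨i, α i, rfl⟩
end

section
/- An action σ with pre(σ) characterizing exactly the initial state I of a task Π' is a meta-operator for Π' if and only if Π' is solvable, where Π' is obtained from an arbitrary task Π by adding a fresh goal variable g and a fresh action a_g with pre(a_g) = G, add(a_g) = {g}, del(a_g) = V, and goal {g}, and σ has add(σ) = {g}, del(σ) = V. -/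
variable {V : Type} [DecidableEq V]

/-- Lift an action over V to an action over V ∪ {g}, with g represented by `none`. -/
def liftAct (a : Act V) : Act (Option V) :=
  { pre := a.pre.image some, npre := a.npre.image some,
    add := a.add.image some, del := a.del.image some, cost := a.cost }

/-- The fresh goal action a_g: precondition G, adds g, deletes all of V. -/
def goalAct [Fintype V] (G : Finset V) : Act (Option V) :=
  { pre := G.image some, npre := ∅, add := {none},
    del := (Finset.univ : Finset V).image some, cost := 1 }

/-- The candidate meta-operator σ: precondition characterizes exactly I, adds g,
deletes all of V. -/
def sigmaAct [Fintype V] (I : Finset V) : Act (Option V) :=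
  { pre := I.image some, npre := ((Finset.univ : Finset V) \ I).image some,
    add := {none}, del := (Finset.univ : Finset V).image some, cost := 1 }

/-- Actions of Π': the lifted actions of Π plus a_g. -/
def isActPrime [Fintype V] (A : Finset (Act V)) (G : Finset V)
    (a : Act (Option V)) : Prop :=
  (∃ b ∈ A, a = liftAct b) ∨ a = goalAct G

/-- σ is a meta-operator for Π': for every state reachable from I satisfying pre(σ),
some action sequence of Π' produces exactly s⟦σ⟧. -/
def isMetaOp [Fintype V] (A : Finset (Act V)) (I G : Finset V) : Prop :=
  ∀ s : Finset (Option V),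
    (∃ π, (∀ a ∈ π, isActPrime A G a) ∧ appSeq (I.image some) π ∧
      execSeq (I.image some) π = s) →
    app s (sigmaAct I) →
    ∃ π, (∀ a ∈ π, isActPrime A G a) ∧ appSeq s π ∧
      execSeq s π = exec s (sigmaAct I)

section Aux
variable {V : Type} [DecidableEq V] [Fintype V]

lemma prime_no_none {A : Finset (Act V)} {G : Finset V} {a : Act (Option V)}
    (h : isActPrime A G a) :
    (none ∉ a.pre) ∧ (none ∉ a.npre) ∧ (none ∉ a.del) := by
  rcases h with ⟨b, _, rfl⟩ | rfl <;> simp [liftAct, goalAct]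

lemma exec_union {A : Finset (Act V)} {G : Finset V} {s t : Finset (Option V)}
    (ht : t ⊆ {none}) {a : Act (Option V)} (h : isActPrime A G a) :
    exec (s ∪ t) a = exec s a ∪ t := by
  obtain ⟨_, _, hdel⟩ := prime_no_none h
  ext x
  simp only [exec, Finset.mem_union, Finset.mem_sdiff]
  constructor
  · rintro (⟨(hx | hx), hd⟩ | hx) <;> tauto
  · rintro ((⟨hx, hd⟩ | hx) | hx)
    · tauto
    · tauto
    · have : x = none := Finset.mem_singleton.mp (ht hx)
      subst this; tauto

lemma app_union {A : Finset (Act V)} {G : Finset V} {s t : Finset (Option V)}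
    (ht : t ⊆ {none}) {a : Act (Option V)} (h : isActPrime A G a) :
    app (s ∪ t) a ↔ app s a := by
  obtain ⟨hpre, hnpre, _⟩ := prime_no_none h
  constructor
  · rintro ⟨h1, h2⟩
    refine ⟨fun x hx => ?_, Finset.disjoint_union_right.mp h2 |>.1⟩
    rcases Finset.mem_union.mp (h1 hx) with hx' | hx'
    · exact hx'
    · have : x = none := Finset.mem_singleton.mp (ht hx')
      subst this; exact absurd hx hpre
  · rintro ⟨h1, h2⟩
    refine ⟨h1.trans Finset.subset_union_left, Finset.disjoint_union_right.mpr ⟨h2, ?_⟩⟩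
    rw [Finset.disjoint_right]
    intro x hx
    have : x = none := Finset.mem_singleton.mp (ht hx)
    subst this; exact hnpre

lemma seq_union {A : Finset (Act V)} {G : Finset V} {t : Finset (Option V)}
    (ht : t ⊆ {none}) :
    ∀ π : List (Act (Option V)), (∀ a ∈ π, isActPrime A G a) →
      ∀ s : Finset (Option V),
        (appSeq s π → appSeq (s ∪ t) π) ∧ execSeq (s ∪ t) π = execSeq s π ∪ t := by
  intro π
  induction π with
  | nil => intro _ s; exact ⟨fun h => h, rfl⟩
  | cons a π ih =>
    intro hall s
    have ha : isActPrime A G a := hall a (by simp)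
    have hrest : ∀ b ∈ π, isActPrime A G b := fun b hb => hall b (by simp [hb])
    obtain ⟨ih1, ih2⟩ := ih hrest (exec s a)
    refine ⟨?_, ?_⟩
    · rintro ⟨h1, h2⟩
      refine ⟨(app_union ht ha).mpr h1, ?_⟩
      rw [exec_union ht ha]
      exact ih1 h2
    · show execSeq (exec (s ∪ t) a) π = _
      rw [exec_union ht ha]
      exact ih2

lemma exec_goal_of_no_none {s : Finset (Option V)} {G : Finset V} (hs : (none : Option V) ∉ s) :
    exec s (goalAct G) = {none} := by
  ext x
  simp only [exec, goalAct, Finset.mem_union, Finset.mem_sdiff, Finset.mem_singleton]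
  constructor
  · rintro (⟨hx, hd⟩ | hx)
    · cases x with
      | none => rfl
      | some v => exact absurd (Finset.mem_image.mpr ⟨v, Finset.mem_univ v, rfl⟩) hd
    · exact hx
  · rintro rfl; right; rfl

lemma truncate_plan {A : Finset (Act V)} {G : Finset V} :
    ∀ π : List (Act (Option V)), ∀ s : Finset (Option V), (none : Option V) ∉ s →
      (∀ a ∈ π, isActPrime A G a) → appSeq s π → none ∈ execSeq s π →
      ∃ π', (∀ a ∈ π', isActPrime A G a) ∧ appSeq s π' ∧ execSeq s π' = {none} := by
  intro π
  induction π with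
  | nil => intro s hs _ _ hmem; exact absurd hmem hs
  | cons a π ih =>
    intro s hs hall happ hmem
    have ha : isActPrime A G a := hall a (by simp)
    rcases ha with ⟨b, hb, rfl⟩ | rfl
    · -- lifted action: none still absent
      have hnone : (none : Option V) ∉ exec s (liftAct b) := by
        simp only [exec, liftAct, Finset.mem_union, Finset.mem_sdiff]
        push_neg
        constructor
        · intro h; exact absurd h hs
        · simp
      obtain ⟨π', h1, h2, h3⟩ := ih (exec s (liftAct b)) hnone
        (fun x hx => hall x (by simp [hx])) happ.2 hmem
      exact ⟨liftAct b :: π', by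
        intro x hx
        rcases List.mem_cons.mp hx with rfl | hx
        · exact Or.inl ⟨b, hb, rfl⟩
        · exact h1 x hx, ⟨happ.1, h2⟩, h3⟩
    · -- goal action: stop here
      exact ⟨[goalAct G], by
        intro x hx
        rcases List.mem_cons.mp hx with rfl | hx
        · exact Or.inr rfl
        · simp at hx, ⟨happ.1, trivial⟩, exec_goal_of_no_none hs⟩

end Aux

/-- σ is a meta-operator for Π' iff Π' is solvable. -/
theorem metaop_iff_solvable [Fintype V] (A : Finset (Act V)) (I G : Finset V) :
    isMetaOp A I G ↔
    ∃ π, (∀ a ∈ π, isActPrime A G a) ∧ appSeq (I.image some) π ∧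
      {(none : Option V)} ⊆ execSeq (I.image some) π := by
  have hIs : (none : Option V) ∉ I.image some := by simp
  have hexecσ : ∀ s : Finset (Option V), exec s (sigmaAct I) =
      (s \ (Finset.univ : Finset V).image some) ∪ {none} := fun s => rfl
  constructor
  · intro h
    have happσ : app (I.image some) (sigmaAct I) := by
      constructor
      · exact Finset.Subset.refl _
      · rw [Finset.disjoint_left]
        intro x hx hx'
        simp only [sigmaAct, Finset.mem_image, Finset.mem_sdiff] at hx hx'
        obtain ⟨v, ⟨_, hv2⟩, rfl⟩ := hx
        obtain ⟨w, hw, hweq⟩ := hx'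
        exact hv2 (by rwa [Option.some_inj.mp hweq] at hw)
    obtain ⟨π, h1, h2, h3⟩ := h (I.image some) ⟨[], by simp, trivial, rfl⟩ happσ
    refine ⟨π, h1, h2, ?_⟩
    rw [h3, hexecσ]
    intro x hx
    simp only [Finset.mem_singleton] at hx
    subst hx
    simp
  · rintro ⟨π, h1, h2, h3⟩
    intro s ⟨π₀, hπ₀⟩ hσ
    -- decompose s = I.image some ∪ t with t ⊆ {none}
    set t : Finset (Option V) := s \ I.image some with htdef
    have hsub : t ⊆ {none} := by
      intro x hx
      rw [htdef, Finset.mem_sdiff] at hx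
      obtain ⟨hxs, hxI⟩ := hx
      cases x with
      | none => simp
      | some v =>
        exfalso
        by_cases hv : v ∈ I
        · exact hxI (Finset.mem_image.mpr ⟨v, hv, rfl⟩)
        · have : (some v : Option V) ∈ (sigmaAct I).npre := by
            simp [sigmaAct, hv]
          exact (Finset.disjoint_left.mp hσ.2) this hxs
    have hseq : s = I.image some ∪ t :=
      (Finset.union_sdiff_of_subset hσ.1).symm
    -- truncate plan
    have hmem : (none : Option V) ∈ execSeq (I.image some) π :=
      h3 (Finset.mem_singleton_self _)
    obtain ⟨π', hp1, hp2, hp3⟩ :=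
      truncate_plan (A := A) (G := G) π (I.image some) hIs h1 h2 hmem
    obtain ⟨hu1, hu2⟩ := seq_union (A := A) (G := G) hsub π' hp1 (I.image some)
    refine ⟨π', hp1, ?_, ?_⟩
    · rw [hseq]; exact hu1 hp2
    · rw [hseq, hu2, hp3, hexecσ]
      -- {none} ∪ t = (I.image some ∪ t) \ image some univ ∪ {none}
      ext x
      simp only [Finset.mem_union, Finset.mem_sdiff, Finset.mem_singleton, Finset.mem_image]
      constructor
      · rintro (rfl | hx)
        · right; rfl
        · have : x = none := Finset.mem_singleton.mp (hsub hx)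
          subst this; right; rfl
      · rintro (⟨hx | hx, hnx⟩ | rfl)
        · exfalso
          obtain ⟨v, hv, rfl⟩ := hx
          exact hnx ⟨v, Finset.mem_univ v, rfl⟩
        · right; exact hx
        · left; rfl
end
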